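/- Non-uniqueness for periodic distributions: let ℓ < L/2 divide L, L > 1, ρ have period ℓ, and x₁ have non-vanishing DFT. Define x₂ by (Fx₂)[k] = (Fx₁)[k] if k is a multiple of L/ℓ and (Fx₂)[k] = −(Fx₁)[k] otherwise. Then x₂ is real, x₂ is not a cyclic shift of x₁, and x₂ has the same first and second moments under ρ as x₁: x₁ ∗ ρ = x₂ ∗ ρ and C_{x₁} D_ρ C_{x₁}^T = C_{x₂} D_ρ C_{x₂}^T. -/

import Mathlib

/-- The discrete Fourier transform of a real signal. -/
noncomputable def dftR {L : ℕ} [NeZero L] (x : ZMod L → ℝ) (k : ZMod L) : ℂ :=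
  ∑ i : ZMod L, (x i : ℂ) *
    Complex.exp (-(2 * (Real.pi : ℂ) * Complex.I * (k.val : ℂ) * (i.val : ℂ)) / (L : ℂ))

/-!
Let `H ≤ ℤ_L` be the subgroup generated by `ℓ` and `P x b = ∑_{h ∈ H} x (b - h)` the coset sum
of `x`. The DFT of `P x` is `|H| • F x` at the frequencies `k` with `ℓ k = 0`, i.e. `L/ℓ ∣ k`,
and vanishes elsewhere, so the relation defining `x₂` says exactly `x₂ = (2 / |H|) P x₁ - x₁`:
on every coset of `H`, `x₂` is the reflection of `x₁` through its mean. Such a reflection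
preserves `∑_{h ∈ H} x (a - h)` and `∑_{h ∈ H} x (a - h) x (b - h)`, and since `ρ` is
`H`-invariant the first and second moments under `ρ` only depend on these sums.

A cyclic shift by `s` multiplies `F x₁ k` by the character value `ψ (-s k)`. Flipping the sign
at `k = 1` forces `ψ (-s) = -1`, hence `ψ (-2 s) = 1`; but `x₂` also flips the sign at `k = 2`,
because `L/ℓ > 2`.
-/

open Finset

section CosetSum

variable {G : Type*} [AddCommGroup G] (H : AddSubgroup G) [Fintype H]

def cosetSum {M : Type*} [AddCommMonoid M] (x : G → M) (b : G) : M := ∑ h : H, x (b - h)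

variable {H}

lemma cosetSum_sub_of_mem {M : Type*} [AddCommMonoid M] (x : G → M) {h : G} (hh : h ∈ H)
    (b : G) : cosetSum H x (b - h) = cosetSum H x b := by
  refine Fintype.sum_equiv (Equiv.addLeft ⟨h, hh⟩) _ _ fun h' ↦ ?_
  simp only [Equiv.coe_addLeft, AddSubgroup.coe_add, sub_sub]

variable {K : Type*} [Semiring K] [Fintype G]

lemma card_mul_sum_mul_of_periodic {ρ : G → K} (hρ : ∀ h ∈ H, Function.Periodic ρ h)
    (f : G → K) :
    (Fintype.card H : K) * ∑ s, ρ s * f s = ∑ s, ρ s * ∑ h : H, f (s + h) :=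
  calc (Fintype.card H : K) * ∑ s, ρ s * f s = ∑ h : H, ∑ s, ρ s * f s := by
        rw [sum_const, card_univ, nsmul_eq_mul]
    _ = ∑ h : H, ∑ s, ρ s * f (s + h) := by
        refine sum_congr rfl fun h _ ↦
          (Fintype.sum_equiv (Equiv.addRight (h : G)) _ _ fun s ↦ ?_).symm
        rw [Equiv.coe_addRight, hρ h h.2 s]
    _ = ∑ s, ρ s * ∑ h : H, f (s + h) := by
        rw [sum_comm]
        simp only [mul_sum]

lemma sum_mul_eq_sum_mul_of_periodic [IsDomain K] [CharZero K] {ρ : G → K}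
    (hρ : ∀ h ∈ H, Function.Periodic ρ h) {f g : G → K}
    (hfg : ∀ s, ∑ h : H, f (s + h) = ∑ h : H, g (s + h)) :
    ∑ s, ρ s * f s = ∑ s, ρ s * g s := by
  refine mul_left_cancel₀ (Nat.cast_ne_zero.2 (Fintype.card_ne_zero (α := H))) ?_
  simp only [card_mul_sum_mul_of_periodic hρ, hfg]

end CosetSum

section Reflection

variable {ι K : Type*} [Fintype ι] [Nonempty ι] [Field K] [CharZero K]

lemma sum_two_div_card_mul_sum_sub (u : ι → K) :
    ∑ i, (2 / Fintype.card ι * ∑ j, u j - u i) = ∑ i, u i := by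
  have : (Fintype.card ι : K) ≠ 0 := Nat.cast_ne_zero.2 Fintype.card_ne_zero
  rw [sum_sub_distrib, sum_const, card_univ, nsmul_eq_mul]
  field_simp
  ring

lemma sum_two_div_card_mul_sum_sub_mul (u v : ι → K) :
    ∑ i, (2 / Fintype.card ι * ∑ j, u j - u i) * (2 / Fintype.card ι * ∑ j, v j - v i) =
      ∑ i, u i * v i := by
  have : (Fintype.card ι : K) ≠ 0 := Nat.cast_ne_zero.2 Fintype.card_ne_zero
  simp only [sub_mul, mul_sub, sum_sub_distrib, sum_const, card_univ, nsmul_eq_mul, ← mul_sum,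
    ← sum_mul]
  field_simp
  ring

end Reflection

namespace ZMod

open AddSubgroup

variable {N : ℕ} [NeZero N]

lemma natCast_mul_eq_zero_iff_div_dvd_val {ℓ : ℕ} (hℓ : 0 < ℓ) (hdiv : ℓ ∣ N) (k : ZMod N) :
    (ℓ : ZMod N) * k = 0 ↔ N / ℓ ∣ k.val := by
  have : (ℓ : ZMod N) * k = ((ℓ * k.val : ℕ) : ZMod N) := by simp
  rw [this, natCast_eq_zero_iff]
  nth_rewrite 1 [← Nat.mul_div_cancel' hdiv]
  exact Nat.mul_dvd_mul_iff_left hℓ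

lemma dft_comp_sub_const {E : Type*} [AddCommGroup E] [Module ℂ E] (Φ : ZMod N → E)
    (s k : ZMod N) : 𝓕 (fun j ↦ Φ (j - s)) k = stdAddChar (-(s * k)) • 𝓕 Φ k := by
  simp only [dft_apply, smul_sum, smul_smul, ← AddChar.map_add_eq_mul]
  refine Fintype.sum_equiv (Equiv.subRight s) _ _ fun j ↦ ?_
  simp only [Equiv.subRight_apply]
  congr 2
  ring

lemma sum_stdAddChar_zmultiples (a k : ZMod N) :
    ∑ h : zmultiples a, stdAddChar (-((h : ZMod N) * k)) =
      if a * k = 0 then (Fintype.card (zmultiples a) : ℂ) else 0 := by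
  let χ : AddChar (zmultiples a) ℂ :=
    stdAddChar.compAddMonoidHom ((AddMonoidHom.mulRight (-k)).comp (zmultiples a).subtype)
  have hχ : χ = 0 ↔ a * k = 0 := by
    have : a * k = 0 ↔ a ∈ (AddMonoidHom.mulRight (-k)).ker := by simp [mul_neg]
    rw [this, ← zmultiples_le, AddChar.eq_zero_iff, SetLike.le_def, Subtype.forall]
    refine forall₂_congr fun x _ ↦ ?_
    rw [AddMonoidHom.mem_ker, ← injective_stdAddChar.eq_iff, AddChar.map_zero_eq_one]
    rfl
  have := χ.sum_eq_ite
  simp only [hχ] at this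
  convert this using 2
  simp [χ]

lemma dft_cosetSum_zmultiples (a : ZMod N) (Φ : ZMod N → ℂ) (k : ZMod N) :
    𝓕 (cosetSum (zmultiples a) Φ) k =
      (if a * k = 0 then (Fintype.card (zmultiples a) : ℂ) else 0) * 𝓕 Φ k := by
  have : cosetSum (zmultiples a) Φ = ∑ h : zmultiples a, fun j ↦ Φ (j - h) := by
    ext j
    simp [cosetSum]
  rw [this, map_sum, Finset.sum_apply]
  simp only [dft_comp_sub_const, smul_eq_mul, ← sum_mul, sum_stdAddChar_zmultiples]

lemma dft_comp_sub_const_two_mul_of_eq_neg {Φ : ZMod N → ℂ} {s k : ZMod N} (hk : 𝓕 Φ k ≠ 0)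
    (hneg : 𝓕 (fun j ↦ Φ (j - s)) k = -𝓕 Φ k) :
    𝓕 (fun j ↦ Φ (j - s)) (2 * k) = 𝓕 Φ (2 * k) := by
  have hψ : stdAddChar (-(s * k)) = -1 := by
    rw [dft_comp_sub_const, smul_eq_mul] at hneg
    exact mul_right_cancel₀ hk (hneg.trans (neg_one_mul _).symm)
  have : -(s * (2 * k)) = -(s * k) + -(s * k) := by ring
  rw [dft_comp_sub_const, this, AddChar.map_add_eq_mul, hψ]
  simp

end ZMod

section dftR

open ZMod AddSubgroup

variable {N : ℕ} [NeZero N]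

lemma dftR_eq_dft (x : ZMod N → ℝ) : dftR x = 𝓕 (fun i ↦ (x i : ℂ)) := by
  ext k
  refine Fintype.sum_congr _ _ fun j ↦ ?_
  have : -(j * k) = ((-(j.val * k.val : ℕ) : ℤ) : ZMod N) := by simp
  rw [this, stdAddChar_coe, smul_eq_mul, mul_comm]
  push_cast
  ring_nf

lemma eq_two_div_card_mul_cosetSum_sub_of_dftR {a : ZMod N} {x y : ZMod N → ℝ}
    (hy : ∀ k, dftR y k = if a * k = 0 then dftR x k else -dftR x k) (b : ZMod N) :
    y b = 2 / Fintype.card (zmultiples a) * cosetSum (zmultiples a) x b - x b := by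
  have hc : (Fintype.card (zmultiples a) : ℂ) ≠ 0 := Nat.cast_ne_zero.2 Fintype.card_ne_zero
  suffices (fun b ↦ (y b : ℂ)) =
      fun b ↦ ((2 / Fintype.card (zmultiples a) * cosetSum (zmultiples a) x b - x b : ℝ) : ℂ) by
    exact_mod_cast congrFun this b
  have hrhs : (fun b ↦
      ((2 / Fintype.card (zmultiples a) * cosetSum (zmultiples a) x b - x b : ℝ) : ℂ)) =
      (2 / Fintype.card (zmultiples a) : ℂ) • cosetSum (zmultiples a) (fun b ↦ (x b : ℂ)) -
        fun b ↦ (x b : ℂ) := by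
    ext b
    simp [cosetSum]
  refine dft.injective (funext fun k ↦ ?_)
  rw [hrhs, map_sub, dft_const_smul, Pi.sub_apply, Pi.smul_apply, dft_cosetSum_zmultiples,
    ← dftR_eq_dft, ← dftR_eq_dft, hy]
  split_ifs
  · rw [smul_eq_mul, ← mul_assoc, div_mul_cancel₀ (2 : ℂ) hc]
    ring
  · simp

lemma not_exists_translate_of_dftR {a : ZMod N} {x y : ZMod N → ℝ} (hx : ∀ k, dftR x k ≠ 0)
    (hy : ∀ k, a * k ≠ 0 → dftR y k = -dftR x k) (ha : a ≠ 0) (h2a : 2 * a ≠ 0) :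
    ¬ ∃ s, ∀ i, y i = x (i - s) := by
  rintro ⟨s, hs⟩
  have hneg (k : ZMod N) (hk : a * k ≠ 0) :
      𝓕 (fun j ↦ (x (j - s) : ℂ)) k = -𝓕 (fun j ↦ (x j : ℂ)) k := by
    simp_rw [← hs, ← dftR_eq_dft, hy k hk]
  have h2 := dft_comp_sub_const_two_mul_of_eq_neg (by simpa [dftR_eq_dft] using hx 1)
    (hneg 1 (by simpa using ha))
  rw [hneg _ (by simpa [mul_comm] using h2a)] at h2
  exact hx _ (by simpa [dftR_eq_dft] using self_eq_neg.mp h2.symm)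

end dftR

open ZMod AddSubgroup

theorem stmt_8_general (L ℓ : ℕ) [NeZero L] (hℓ0 : 0 < ℓ)
    (hdiv : ℓ ∣ L) (hhalf : 2 * ℓ < L)
    (x₁ x₂ ρ : ZMod L → ℝ)
    (hper : ∀ k : ZMod L, ρ (k + (ℓ : ZMod L)) = ρ k)
    (hx₁ : ∀ k, dftR x₁ k ≠ 0)
    (hx₂ : ∀ k : ZMod L,
      dftR x₂ k = if (L / ℓ) ∣ k.val then dftR x₁ k else -dftR x₁ k) :
    (¬ ∃ s : ZMod L, ∀ i, x₂ i = x₁ (i - s))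
    ∧ (∀ i, ∑ s, ρ s * x₁ (i - s) = ∑ s, ρ s * x₂ (i - s))
    ∧ (∀ i j, ∑ s, ρ s * (x₁ (i - s) * x₁ (j - s))
            = ∑ s, ρ s * (x₂ (i - s) * x₂ (j - s))) := by
  set H := zmultiples (ℓ : ZMod L)
  simp_rw [← natCast_mul_eq_zero_iff_div_dvd_val hℓ0 hdiv] at hx₂
  have hx₂H (b : ZMod L) (h : H) :
      x₂ (b - h) = 2 / Fintype.card H * cosetSum H x₁ b - x₁ (b - h) := by
    rw [eq_two_div_card_mul_cosetSum_sub_of_dftR hx₂, cosetSum_sub_of_mem _ h.2]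
  have hρH : ∀ h ∈ H, Function.Periodic ρ h := by
    rintro h ⟨n, rfl⟩
    exact Function.Periodic.zsmul hper n
  have hne (m : ℕ) (hm0 : 0 < m) (hm : m < L) : (m : ZMod L) ≠ 0 := by
    rw [Ne, natCast_eq_zero_iff]
    exact Nat.not_dvd_of_pos_of_lt hm0 hm
  refine ⟨?_, fun i ↦ ?_, fun i j ↦ ?_⟩
  · exact not_exists_translate_of_dftR hx₁ (fun k hk ↦ by rw [hx₂, if_neg hk])
      (hne ℓ hℓ0 (by omega)) (by exact_mod_cast hne (2 * ℓ) (by omega) hhalf)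
  · refine sum_mul_eq_sum_mul_of_periodic hρH fun s ↦ ?_
    simp only [← sub_sub, hx₂H]
    exact (sum_two_div_card_mul_sum_sub _).symm
  · refine sum_mul_eq_sum_mul_of_periodic hρH fun s ↦ ?_
    simp only [← sub_sub, hx₂H]
    exact (sum_two_div_card_mul_sum_sub_mul _ _).symm

/-- Non-uniqueness for periodic distributions: if `ℓ < L/2` divides `L`, `ρ` has
period `ℓ`, `x₁` has non-vanishing DFT, and the real signal `x₂` satisfies
`(Fx₂)[k] = (Fx₁)[k]` when `L/ℓ ∣ k` and `(Fx₂)[k] = -(Fx₁)[k]` otherwise, then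
`x₂` is not a cyclic shift of `x₁` and has the same first and second moments
under `ρ` as `x₁`. -/
theorem stmt_8 (L ℓ : ℕ) [NeZero L] (hL : 1 < L) (hℓ0 : 0 < ℓ)
    (hdiv : ℓ ∣ L) (hhalf : 2 * ℓ < L)
    (x₁ x₂ ρ : ZMod L → ℝ)
    (hρ0 : ∀ s, 0 ≤ ρ s) (hρ1 : ∑ s, ρ s = 1)
    (hper : ∀ k : ZMod L, ρ (k + (ℓ : ZMod L)) = ρ k)
    (hx₁ : ∀ k, dftR x₁ k ≠ 0)
    (hx₂ : ∀ k : ZMod L,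
      dftR x₂ k = if (L / ℓ) ∣ k.val then dftR x₁ k else -dftR x₁ k) :
    (¬ ∃ s : ZMod L, ∀ i, x₂ i = x₁ (i - s))
    ∧ (∀ i, ∑ s, ρ s * x₁ (i - s) = ∑ s, ρ s * x₂ (i - s))
    ∧ (∀ i j, ∑ s, ρ s * (x₁ (i - s) * x₁ (j - s))
            = ∑ s, ρ s * (x₂ (i - s) * x₂ (j - s))) :=
  stmt_8_general L ℓ hℓ0 hdiv hhalf x₁ x₂ ρ hper hx₁ hx₂
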